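/- arXiv:2301.03077 — 2 statements merged into one kernel-verified Lean document; each statement's English description precedes it below -/
import Mathlib

section
/- If V : ℝ^d → ℝ is C², satisfies min V > 0, and the Kurdyka-Łojasiewicz condition c·V(θ)^{-r} ≤ λ_min(∇²V(θ)) for all θ with 0 ≤ r < 1 and c > 0, then for all θ: ‖∇V(θ)‖² ≥ (2c/(1-r)) (V(θ)^{1-r} - (min V)^{1-r}). -/
/-!
Restrict `V` to the segment `s ↦ θstar + s • (θ - θstar)` and call the result `g`. Then `g' 0 = 0`,
and the Kurdyka–Łojasiewicz bound gives `g'' ≥ a g^{-r}` with `a = c ‖θ - θstar‖²`. Hence `g'` is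
nonnegative on `[0, ∞)`, and the energy `g'²/2 - a/(1-r) · g^{1-r}` has derivative
`g' (g'' - a g^{-r}) ≥ 0` there, which gives `g'(1)² ≥ 2a/(1-r) (g(1)^{1-r} - g(0)^{1-r})`.
Cauchy–Schwarz, `g'(1) = ⟪∇V θ, θ - θstar⟫ ≤ ‖∇V θ‖ ‖θ - θstar‖`, then removes `‖θ - θstar‖²`.
-/

open Real

section OneVariable

variable {g g' g'' : ℝ → ℝ} {a r : ℝ}

theorem energy_monotoneOn_Ici (hg : ∀ s, HasDerivAt g (g' s) s)
    (hg' : ∀ s, HasDerivAt g' (g'' s) s) (hpos : ∀ s, 0 < g s) (ha : 0 ≤ a) (hr : r ≠ 1)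
    (h₀ : 0 ≤ g' 0) (hKL : ∀ s, a * g s ^ (-r) ≤ g'' s) :
    MonotoneOn (fun s => g' s ^ 2 / 2 - a / (1 - r) * g s ^ (1 - r)) (Set.Ici 0) := by
  have hr' : 1 - r ≠ 0 := sub_ne_zero.mpr hr.symm
  have hg'_mono : Monotone g' :=
    monotone_of_hasDerivAt_nonneg hg' fun s => (hKL s).trans' (by have := hpos s; positivity)
  have hderiv : ∀ s, HasDerivAt (fun s => g' s ^ 2 / 2 - a / (1 - r) * g s ^ (1 - r))
      (g' s * (g'' s - a * g s ^ (-r))) s := by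
    intro s
    have hpow := ((hasDerivAt_rpow_const (p := 1 - r) (Or.inl (hpos s).ne')).comp s
      (hg s)).const_mul (a / (1 - r))
    refine ((((hg' s).pow 2).div_const 2).sub hpow).congr_deriv ?_
    rw [show (1 : ℝ) - r - 1 = -r by ring]
    field_simp
    ring
  refine monotoneOn_of_hasDerivWithinAt_nonneg (convex_Ici 0)
    (fun s _ => (hderiv s).continuousAt.continuousWithinAt)
    (fun s _ => (hderiv s).hasDerivWithinAt) fun s hs => ?_
  rw [interior_Ici, Set.mem_Ioi] at hs
  exact mul_nonneg (h₀.trans (hg'_mono hs.le)) (sub_nonneg.mpr (hKL s))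

theorem mul_rpow_sub_le_sq_deriv (hg : ∀ s, HasDerivAt g (g' s) s)
    (hg' : ∀ s, HasDerivAt g' (g'' s) s) (hpos : ∀ s, 0 < g s) (ha : 0 ≤ a) (hr : r ≠ 1)
    (h₀ : 0 ≤ g' 0) (hKL : ∀ s, a * g s ^ (-r) ≤ g'' s) {t : ℝ} (ht : 0 ≤ t) :
    2 * a / (1 - r) * (g t ^ (1 - r) - g 0 ^ (1 - r)) ≤ g' t ^ 2 := by
  have h := energy_monotoneOn_Ici hg hg' hpos ha hr h₀ hKL (Set.mem_Ici.mpr le_rfl) ht ht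
  simp only at h
  rw [mul_div_assoc, mul_assoc]
  nlinarith [sq_nonneg (g' 0)]

end OneVariable

theorem hasDerivAt_comp_add_smul {E F : Type*} [NormedAddCommGroup E] [NormedSpace ℝ E]
    [NormedAddCommGroup F] [NormedSpace ℝ F] {f : E → F} {x u : E} {t : ℝ}
    (hf : DifferentiableAt ℝ f (x + t • u)) :
    HasDerivAt (fun s : ℝ => f (x + s • u)) (fderiv ℝ f (x + t • u) u) t := by
  refine hf.hasFDerivAt.comp_hasDerivAt t ?_
  simpa using ((hasDerivAt_id t).smul_const u).const_add x

theorem stmt1_general {d : ℕ} (V : EuclideanSpace ℝ (Fin d) → ℝ) (r c : ℝ)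
    (hr1 : r < 1) (hc : 0 < c)
    (hC2 : ContDiff ℝ 2 V)
    (θstar : EuclideanSpace ℝ (Fin d)) (hmin : ∀ θ, V θstar ≤ V θ)
    (hpos : 0 < V θstar)
    (hKL : ∀ θ v, c * (V θ) ^ (-r) * ‖v‖ ^ 2 ≤ (fderiv ℝ (fderiv ℝ V) θ v) v) :
    ∀ θ, (2 * c / (1 - r)) * ((V θ) ^ (1 - r) - (V θstar) ^ (1 - r))
      ≤ ‖gradient V θ‖ ^ 2 := by
  intro θ
  rcases eq_or_ne θ θstar with rfl | hθ
  · simp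
  set u := θ - θstar
  have hu : 0 < ‖u‖ ^ 2 := by have := norm_pos_iff.mpr (sub_ne_zero.mpr hθ); positivity
  have hdV : Differentiable ℝ V := hC2.differentiable two_ne_zero
  have hdV' : Differentiable ℝ (fderiv ℝ V) :=
    (hC2.fderiv_right (m := 1) le_rfl).differentiable one_ne_zero
  have hcrit : fderiv ℝ V θstar = 0 :=
    ((isMinOn_univ_iff.mpr hmin).isLocalMin Filter.univ_mem).fderiv_eq_zero
  have hsegment := mul_rpow_sub_le_sq_deriv (g := fun s : ℝ => V (θstar + s • u))
    (a := c * ‖u‖ ^ 2) (fun s => hasDerivAt_comp_add_smul (hdV _))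
    (fun s => (ContinuousLinearMap.apply ℝ ℝ u).hasFDerivAt.comp_hasDerivAt s
      (hasDerivAt_comp_add_smul (hdV' _)))
    (fun s => hpos.trans_le (hmin _)) (by positivity) hr1.ne (by simp [hcrit])
    (fun s => by simpa [mul_right_comm] using hKL _ u) zero_le_one
  have hcs : fderiv ℝ V θ u ^ 2 ≤ ‖gradient V θ‖ ^ 2 * ‖u‖ ^ 2 := by
    rw [← mul_pow, ← InnerProductSpace.toDual_symm_apply (x := u), ← gradient]
    exact sq_le_sq.mpr ((abs_real_inner_le_norm _ _).trans (le_abs_self _))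
  simp only [one_smul, zero_smul, add_zero, add_sub_cancel, u] at hsegment
  rw [← mul_le_mul_iff_left₀ hu]
  calc 2 * c / (1 - r) * (V θ ^ (1 - r) - V θstar ^ (1 - r)) * ‖u‖ ^ 2
      = 2 * (c * ‖u‖ ^ 2) / (1 - r) * (V θ ^ (1 - r) - V θstar ^ (1 - r)) := by ring
    _ ≤ ‖gradient V θ‖ ^ 2 * ‖u‖ ^ 2 := hsegment.trans hcs

theorem stmt1 {d : ℕ} (V : EuclideanSpace ℝ (Fin d) → ℝ) (r c : ℝ)
    (hr0 : 0 ≤ r) (hr1 : r < 1) (hc : 0 < c)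
    (hC2 : ContDiff ℝ 2 V) (hconv : ConvexOn ℝ Set.univ V)
    (θstar : EuclideanSpace ℝ (Fin d)) (hmin : ∀ θ, V θstar ≤ V θ)
    (hpos : 0 < V θstar)
    (hKL : ∀ θ v, c * (V θ) ^ (-r) * ‖v‖ ^ 2 ≤ (fderiv ℝ (fderiv ℝ V) θ v) v) :
    ∀ θ, (2 * c / (1 - r)) * ((V θ) ^ (1 - r) - (V θstar) ^ (1 - r))
      ≤ ‖gradient V θ‖ ^ 2 :=
  stmt1_general V r c hr1 hc hC2 θstar hmin hpos hKL
end

section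
/- Suppose for each i = 1,…,n the function θ ↦ -log p_θ(X_i) is C², convex, with positive minimum, and satisfies λ_min(∇²(-log p_θ(X_i))) ≥ c·(-log p_θ(X_i))^{-r}, and -log π₀ is convex with positive minimum. Then U_{ν_n}(θ) = -log π₀(θ) - Σᵢ log p_θ(X_i) satisfies λ_min(∇²U_{ν_n}(θ)) ≥ c·n^{1+r}·U_{ν_n}(θ)^{-r} for all θ. -/
/-!
The Hessian of `U` is the Hessian of the convex prior term, which is positive semidefinite,
plus the sum of the Hessians of the `V i`, whose value at `(v, v)` is at least
`c * ∑ i, V i θ ^ (-r) * ‖v‖ ^ 2`.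
Jensen for the convex map `x ↦ x ^ (-r)` gives
`∑ i, V i θ ^ (-r) ≥ n ^ (1 + r) * (∑ i, V i θ) ^ (-r)`; finally `U θ ≥ ∑ i, V i θ` since
the prior term is positive, and `x ↦ x ^ (-r)` is antitone.
-/

open Real MeasureTheory

open Finset Set

section SecondDerivative

variable {𝕜 E F : Type*} [NontriviallyNormedField 𝕜] [NormedAddCommGroup E] [NormedSpace 𝕜 E]
  [NormedAddCommGroup F] [NormedSpace 𝕜 F]

theorem fderiv_fderiv_fun_add {f g : E → F} (hf : ContDiff 𝕜 2 f) (hg : ContDiff 𝕜 2 g) (x : E) :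
    fderiv 𝕜 (fderiv 𝕜 fun y ↦ f y + g y) x =
      fderiv 𝕜 (fderiv 𝕜 f) x + fderiv 𝕜 (fderiv 𝕜 g) x := by
  have hfd : fderiv 𝕜 (fun y ↦ f y + g y) = fun y ↦ fderiv 𝕜 f y + fderiv 𝕜 g y := funext fun y ↦
    fderiv_fun_add (hf.differentiable two_ne_zero y) (hg.differentiable two_ne_zero y)
  rw [hfd, fderiv_fun_add ((hf.fderiv_right one_add_one_eq_two.le).differentiable one_ne_zero x)
    ((hg.fderiv_right one_add_one_eq_two.le).differentiable one_ne_zero x)]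

theorem fderiv_fderiv_fun_sum {ι : Type*} {s : Finset ι} {f : ι → E → F}
    (hf : ∀ i ∈ s, ContDiff 𝕜 2 (f i)) (x : E) :
    fderiv 𝕜 (fderiv 𝕜 fun y ↦ ∑ i ∈ s, f i y) x = ∑ i ∈ s, fderiv 𝕜 (fderiv 𝕜 (f i)) x := by
  have hfd : fderiv 𝕜 (fun y ↦ ∑ i ∈ s, f i y) = fun y ↦ ∑ i ∈ s, fderiv 𝕜 (f i) y :=
    funext fun y ↦ fderiv_fun_sum fun i hi ↦ (hf i hi).differentiable two_ne_zero y
  rw [hfd, fderiv_fun_sum fun i hi ↦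
    (((hf i hi).fderiv_right one_add_one_eq_two.le).differentiable one_ne_zero x)]

end SecondDerivative

theorem ConvexOn.fderiv_fderiv_apply_self_nonneg {E : Type*} [NormedAddCommGroup E]
    [NormedSpace ℝ E] {f : E → ℝ} (hconv : ConvexOn ℝ univ f) (hf : ContDiff ℝ 2 f) (x v : E) :
    0 ≤ fderiv ℝ (fderiv ℝ f) x v v := by
  set L : ℝ →ᵃ[ℝ] E := AffineMap.lineMap x (x + v)
  have hL (t : ℝ) : HasDerivAt L v t := by
    simpa using AffineMap.hasDerivAt_lineMap (a := x) (b := x + v) (x := t)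
  have hg (t : ℝ) : HasDerivAt (f ∘ L) (fderiv ℝ f (L t) v) t :=
    (hf.differentiable two_ne_zero _).hasFDerivAt.comp_hasDerivAt t (hL t)
  have hmono : Monotone (deriv (f ∘ L)) := by
    have := (hconv.comp_affineMap L).monotoneOn_deriv fun t _ ↦ (hg t).differentiableAt
    rwa [preimage_univ, monotoneOn_univ] at this
  have hDf : HasDerivAt (fderiv ℝ f ∘ L) (fderiv ℝ (fderiv ℝ f) x v) 0 := by
    have hL0 : L 0 = x := AffineMap.lineMap_apply_zero _ _
    have := ((hf.fderiv_right one_add_one_eq_two.le).differentiable one_ne_zero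
      (L 0)).hasFDerivAt.comp_hasDerivAt 0 (hL 0)
    rwa [hL0] at this
  rw [show deriv (f ∘ L) = fun t ↦ fderiv ℝ f (L t) v from funext fun t ↦ (hg t).deriv] at hmono
  exact ((ContinuousLinearMap.apply ℝ ℝ v).hasFDerivAt.comp_hasDerivAt 0 hDf).nonneg_of_monotone
    hmono

theorem convexOn_rpow_neg {r : ℝ} (hr : 0 ≤ r) : ConvexOn ℝ (Ioi 0) fun x : ℝ ↦ x ^ (-r) := by
  refine convexOn_of_hasDerivWithinAt2_nonneg (convex_Ioi 0)
    (f' := fun x ↦ -r * x ^ (-r - 1)) (f'' := fun x ↦ -r * ((-r - 1) * x ^ (-r - 1 - 1)))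
    (fun x hx ↦ (continuousAt_rpow_const x _ (Or.inl hx.ne')).continuousWithinAt) ?_ ?_ ?_ <;>
    rw [interior_Ioi] <;> intro x (hx : 0 < x)
  · exact (hasDerivAt_rpow_const (Or.inl hx.ne')).hasDerivWithinAt
  · exact ((hasDerivAt_rpow_const (Or.inl hx.ne')).const_mul _).hasDerivWithinAt
  · have := rpow_nonneg hx.le (-r - 1 - 1)
    nlinarith [mul_nonneg (mul_nonneg hr (by linarith : 0 ≤ r + 1)) this]

theorem card_rpow_one_add_mul_sum_rpow_neg_le {ι : Type*} {s : Finset ι} (hs : s.Nonempty)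
    {z : ι → ℝ} (hz : ∀ i ∈ s, 0 < z i) {r : ℝ} (hr : 0 ≤ r) :
    (#s : ℝ) ^ (1 + r) * (∑ i ∈ s, z i) ^ (-r) ≤ ∑ i ∈ s, z i ^ (-r) := by
  set m : ℝ := (#s : ℝ)
  have hm : 0 < m := by simpa [m] using hs.card_pos
  have hS : 0 < ∑ i ∈ s, z i := sum_pos hz hs
  have hjensen : (m⁻¹ * ∑ i ∈ s, z i) ^ (-r) ≤ m⁻¹ * ∑ i ∈ s, z i ^ (-r) := by
    simpa [smul_eq_mul, ← mul_sum] using (convexOn_rpow_neg hr).map_sum_le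
      (w := fun _ ↦ m⁻¹) (fun _ _ ↦ by positivity) (by simp [m, hm.ne']) hz
  calc m ^ (1 + r) * (∑ i ∈ s, z i) ^ (-r) = m * (m⁻¹ * ∑ i ∈ s, z i) ^ (-r) := by
        rw [mul_rpow (by positivity) hS.le, inv_rpow hm.le, ← rpow_neg hm.le, neg_neg,
          rpow_add hm, rpow_one, mul_assoc]
    _ ≤ m * (m⁻¹ * ∑ i ∈ s, z i ^ (-r)) := by gcongr
    _ = ∑ i ∈ s, z i ^ (-r) := mul_inv_cancel_left₀ hm.ne' _

theorem stmt6_general {d n : ℕ} (hn : 0 < n) (r c : ℝ)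
    (hr0 : 0 ≤ r) (hc : 0 < c)
    (V : Fin n → EuclideanSpace ℝ (Fin d) → ℝ)
    (P : EuclideanSpace ℝ (Fin d) → ℝ)
    (hVC2 : ∀ i, ContDiff ℝ 2 (V i))
    (hVpos : ∀ i θ, 0 < V i θ)
    (hVKL : ∀ i θ v, c * (V i θ) ^ (-r) * ‖v‖ ^ 2
      ≤ (fderiv ℝ (fderiv ℝ (V i)) θ v) v)
    (hPC2 : ContDiff ℝ 2 P) (hPconv : ConvexOn ℝ Set.univ P)
    (hPpos : ∀ θ, 0 < P θ)
    (U : EuclideanSpace ℝ (Fin d) → ℝ)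
    (hU : ∀ θ, U θ = P θ + ∑ i, V i θ) :
    ∀ θ v, c * (n : ℝ) ^ ((1 : ℝ) + r) * (U θ) ^ (-r) * ‖v‖ ^ 2
      ≤ (fderiv ℝ (fderiv ℝ U) θ v) v := by
  intro θ v
  have hHess : fderiv ℝ (fderiv ℝ U) θ v v
      = fderiv ℝ (fderiv ℝ P) θ v v + ∑ i, fderiv ℝ (fderiv ℝ (V i)) θ v v := by
    rw [funext hU, fderiv_fderiv_fun_add hPC2 (ContDiff.sum fun i _ ↦ hVC2 i),
      fderiv_fderiv_fun_sum fun i _ ↦ hVC2 i]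
    simp only [add_apply, _root_.sum_apply]
  have hne : (univ : Finset (Fin n)).Nonempty := ⟨⟨0, hn⟩, mem_univ _⟩
  have hS : 0 < ∑ i, V i θ := sum_pos (fun i _ ↦ hVpos i θ) hne
  have hSU : U θ ^ (-r) ≤ (∑ i, V i θ) ^ (-r) :=
    rpow_le_rpow_of_nonpos hS (by linarith [hU θ, hPpos θ]) (neg_nonpos.2 hr0)
  have hJensen := card_rpow_one_add_mul_sum_rpow_neg_le hne (fun i _ ↦ hVpos i θ) hr0
  rw [card_univ, Fintype.card_fin] at hJensen
  calc c * (n : ℝ) ^ ((1 : ℝ) + r) * (U θ) ^ (-r) * ‖v‖ ^ 2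
      ≤ c * ((n : ℝ) ^ ((1 : ℝ) + r) * (∑ i, V i θ) ^ (-r)) * ‖v‖ ^ 2 := by
        rw [← mul_assoc]; gcongr
    _ ≤ c * (∑ i, V i θ ^ (-r)) * ‖v‖ ^ 2 := by gcongr
    _ = ∑ i, c * V i θ ^ (-r) * ‖v‖ ^ 2 := by rw [mul_sum, sum_mul]
    _ ≤ ∑ i, fderiv ℝ (fderiv ℝ (V i)) θ v v := sum_le_sum fun i _ ↦ hVKL i θ v
    _ ≤ fderiv ℝ (fderiv ℝ U) θ v v := by
      rw [hHess]; exact le_add_of_nonneg_left (hPconv.fderiv_fderiv_apply_self_nonneg hPC2 θ v)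

theorem stmt6 {d n : ℕ} (hn : 0 < n) (r c : ℝ)
    (hr0 : 0 ≤ r) (hr1 : r < 1) (hc : 0 < c)
    (V : Fin n → EuclideanSpace ℝ (Fin d) → ℝ)
    (P : EuclideanSpace ℝ (Fin d) → ℝ)
    (hVC2 : ∀ i, ContDiff ℝ 2 (V i)) (hVconv : ∀ i, ConvexOn ℝ Set.univ (V i))
    (hVpos : ∀ i θ, 0 < V i θ)
    (hVKL : ∀ i θ v, c * (V i θ) ^ (-r) * ‖v‖ ^ 2
      ≤ (fderiv ℝ (fderiv ℝ (V i)) θ v) v)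
    (hPC2 : ContDiff ℝ 2 P) (hPconv : ConvexOn ℝ Set.univ P)
    (hPpos : ∀ θ, 0 < P θ)
    (U : EuclideanSpace ℝ (Fin d) → ℝ)
    (hU : ∀ θ, U θ = P θ + ∑ i, V i θ) :
    ∀ θ v, c * (n : ℝ) ^ ((1 : ℝ) + r) * (U θ) ^ (-r) * ‖v‖ ^ 2
      ≤ (fderiv ℝ (fderiv ℝ U) θ v) v :=
  stmt6_general hn r c hr0 hc V P hVC2 hVpos hVKL hPC2 hPconv hPpos U hU
end
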